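/- Let S be a set of sorts, A an S-sorted set, and k ∈ ℕ₊. For any Q ⊆ Rp(A^k), the minor closures in Rp(A) satisfy ⟨Q↓⟩ = ⟨(⟨Q⟩)↓⟩, where ⟨Q⟩ is the minor-closure of Q in Rp(A^k) and ↓ is flattening from A^k to A. -/

import Mathlib

/-!
Framework for multisorted minions and relation pairs, following
Lehtonen–Pöschel–Waldhauser.

* An `S`-sorted set is modelled as a family `A : S → Type*` (components may be empty).
* `MOp S A` is the type of `S`-sorted operations on `A` (with declaration `(arity, sort)`).
* `RelPair S A` is the type of `S`-sorted relation pairs on `A`.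
* `SortedReflection S A B` models a reflection `(h, h')` of `A` into `B`:
  `h_s : B_s → A_s` and `h'_s : A_s → B_s`, the latter only required for sorts `s`
  with `B_s ≠ ∅` (for sorts with `B_s` empty a map `B_s → A_s` exists trivially,
  so this encoding is faithful to components being indexed by essential sorts of `B`).
-/

universe u u' v w

variable {S : Type w}

/-- A multisorted operation on an `S`-sorted set `A`, with declaration
`(arity, sort)` (the word `w = s_1 … s_n` is modelled as `arity : Fin n → S`). -/
structure MOp (S : Type w) (A : S → Type u) where
  n : ℕ
  arity : Fin n → S
  sort : S
  fn : (∀ i, A (arity i)) → A sort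

/-- The minor `f^u_σ` of a multisorted operation `f`, for a word `u : Fin m → S` and a
sort-compatible map `σ`. -/
def MOp.minor {A : S → Type u} (f : MOp S A) {m : ℕ} (u : Fin m → S)
    (σ : Fin f.n → Fin m) (h : ∀ i, u (σ i) = f.arity i) : MOp S A where
  n := m
  arity := u
  sort := f.sort
  fn := fun a => f.fn fun i => cast (congrArg A (h i)) (a (σ i))

/-- A minion: a minor-closed set of multisorted operations. -/
def IsMinion {A : S → Type u} (F : Set (MOp S A)) : Prop :=
  ∀ f ∈ F, ∀ (m : ℕ) (u : Fin m → S) (σ : Fin f.n → Fin m)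
    (h : ∀ i, u (σ i) = f.arity i), f.minor u σ h ∈ F

/-- An `S`-sorted relation pair on `A`: a pair `(R, R')` of `m`-ary `S`-sorted
relations on `A` (an `m`-ary relation is a family of sets of `m`-tuples, one for
each sort). -/
structure RelPair (S : Type w) (A : S → Type u) where
  m : ℕ
  R : ∀ s, Set (Fin m → A s)
  R' : ∀ s, Set (Fin m → A s)

/-- `f` preserves the relation pair `p = (R, R')`: applying `f` row-wise to a matrix
whose columns (at the respective input sorts) lie in `R` produces a column in `R'`. -/
def MOp.Preserves {A : S → Type u} (f : MOp S A) (p : RelPair S A) : Prop :=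
  ∀ a : ∀ i, Fin p.m → A (f.arity i),
    (∀ i, a i ∈ p.R (f.arity i)) →
    (fun j => f.fn fun i => a i j) ∈ p.R' f.sort

/-- Multisorted polymorphisms of a set of relation pairs. -/
def mPol {A : S → Type u} (Q : Set (RelPair S A)) : Set (MOp S A) :=
  {f | ∀ p ∈ Q, f.Preserves p}

/-- Invariant relation pairs of a set of multisorted operations. -/
def mInv {A : S → Type u} (F : Set (MOp S A)) : Set (RelPair S A) :=
  {p | ∀ f ∈ F, f.Preserves p}

/-- `p` is a relaxation of `q`: same arity, `p.R ⊆ q.R` and `p.R' ⊇ q.R'`. -/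
def RelPair.Relaxation {A : S → Type u} (p q : RelPair S A) : Prop :=
  ∃ hm : p.m = q.m,
    (∀ s, ∀ x ∈ p.R s, (fun j => x (Fin.cast hm.symm j)) ∈ q.R s) ∧
    (∀ s, ∀ x ∈ q.R' s, (fun j => x (Fin.cast hm j)) ∈ p.R' s)

/-- The set of all relaxations of members of `Q`. -/
def Relax {A : S → Type u} (Q : Set (RelPair S A)) : Set (RelPair S A) :=
  {p | ∃ q ∈ Q, p.Relaxation q}

/-- The diagonal relation pair `(δ^m_ρ, δ^m_ρ)` for an equivalence relation `ρ` on
`{1, …, m}`. -/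
def diagPair (A : S → Type u) (m : ℕ) (ρ : Setoid (Fin m)) : RelPair S A :=
  ⟨m, fun _ => {x | ∀ i j, ρ.r i j → x i = x j},
      fun _ => {x | ∀ i j, ρ.r i j → x i = x j}⟩

/-- Permutation of coordinates of a relation pair.  (The elementary operations `ζ`
(cyclic shift) and `τ` (transposition of the first two coordinates) generate all
coordinate permutations, so closure under `ζ` and `τ` is the same as closure under
all coordinate permutations.) -/
def RelPair.permute {A : S → Type u} (p : RelPair S A) (e : Equiv.Perm (Fin p.m)) :
    RelPair S A :=
  ⟨p.m, fun s => {x | (fun j => x (e j)) ∈ p.R s},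
        fun s => {x | (fun j => x (e j)) ∈ p.R' s}⟩

/-- The elementary operation `pr`: deletion of the first coordinate. -/
def RelPair.proj {A : S → Type u} (p : RelPair S A) : RelPair S A :=
  ⟨p.m - 1,
   fun s => {x | ∃ y ∈ p.R s, ∀ j : Fin (p.m - 1),
     x j = y ⟨j.val + 1, by have := j.isLt; omega⟩},
   fun s => {x | ∃ y ∈ p.R' s, ∀ j : Fin (p.m - 1),
     x j = y ⟨j.val + 1, by have := j.isLt; omega⟩}⟩

/-- The elementary operation `×`: direct product of relation pairs. -/
def RelPair.prod {A : S → Type u} (p q : RelPair S A) : RelPair S A :=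
  ⟨p.m + q.m,
   fun s => {x | (fun j => x (Fin.castAdd q.m j)) ∈ p.R s ∧
                 (fun j => x (Fin.natAdd p.m j)) ∈ q.R s},
   fun s => {x | (fun j => x (Fin.castAdd q.m j)) ∈ p.R' s ∧
                 (fun j => x (Fin.natAdd p.m j)) ∈ q.R' s}⟩

/-- The elementary operation `∧`: intersection of two relation pairs of equal arity. -/
def RelPair.interPair {A : S → Type u} (p q : RelPair S A) (hm : p.m = q.m) :
    RelPair S A :=
  ⟨p.m,
   fun s => {x | x ∈ p.R s ∧ (fun j => x (Fin.cast hm.symm j)) ∈ q.R s},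
   fun s => {x | x ∈ p.R' s ∧ (fun j => x (Fin.cast hm.symm j)) ∈ q.R' s}⟩

/-- Intersection of an arbitrary family of relation pairs of common arity `m`. -/
def interFamily {A : S → Type u} (m : ℕ) (T : Set (RelPair S A)) : RelPair S A :=
  ⟨m,
   fun s => {x | ∀ p ∈ T, ∀ hm : m = p.m, (fun j => x (Fin.cast hm.symm j)) ∈ p.R s},
   fun s => {x | ∀ p ∈ T, ∀ hm : m = p.m, (fun j => x (Fin.cast hm.symm j)) ∈ p.R' s}⟩

/-- A set of relation pairs is minor-closed if it contains all diagonal relation pairs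
and is closed under coordinate permutations (equivalently, under `ζ` and `τ`),
deletion of a coordinate, direct products, intersections of pairs of equal arity,
relaxations, and arbitrary intersections. -/
def IsMinorClosed {A : S → Type u} (Q : Set (RelPair S A)) : Prop :=
  (∀ (m : ℕ) (ρ : Setoid (Fin m)), diagPair A m ρ ∈ Q) ∧
  (∀ p ∈ Q, ∀ e : Equiv.Perm (Fin p.m), p.permute e ∈ Q) ∧
  (∀ p ∈ Q, p.proj ∈ Q) ∧
  (∀ p ∈ Q, ∀ q ∈ Q, p.prod q ∈ Q) ∧
  (∀ p ∈ Q, ∀ q ∈ Q, ∀ hm : p.m = q.m, p.interPair q hm ∈ Q) ∧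
  (∀ q ∈ Q, ∀ p : RelPair S A, p.Relaxation q → p ∈ Q) ∧
  (∀ (m : ℕ) (T : Set (RelPair S A)), T ⊆ Q → (∀ p ∈ T, p.m = m) →
    interFamily m T ∈ Q)

/-- The minor-closure `⟨Q⟩` of a set of relation pairs: the least minor-closed set
containing `Q`. -/
def minorClosure {A : S → Type u} (Q : Set (RelPair S A)) : Set (RelPair S A) :=
  ⋂₀ {T | IsMinorClosed T ∧ Q ⊆ T}

/-- A reflection `(h, h')` of `A` into `B`: maps `h_s : B_s → A_s` and
`h'_s : A_s → B_s`, the latter given for the sorts `s` with `B_s` nonempty. -/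
structure SortedReflection (S : Type w) (A : S → Type u) (B : S → Type u') where
  h : ∀ s, B s → A s
  h' : ∀ s, Nonempty (B s) → A s → B s

/-- The declaration of `f` is reasonable in `B`: if `B_w ≠ ∅` then `B_s ≠ ∅`. -/
def Reasonable {A : S → Type u} (B : S → Type u') (f : MOp S A) : Prop :=
  (∀ i, Nonempty (B (f.arity i))) → Nonempty (B f.sort)

/-- The `(h,h')`-reflection `f_{(h,h')}` of an operation `f` whose declaration is
reasonable in `B`.  (If `B_w = ∅` then the domain is empty and this is the empty map.) -/
def MOp.reflect {A : S → Type u} {B : S → Type u'} (f : MOp S A)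
    (r : SortedReflection S A B) (hf : Reasonable B f) : MOp S B where
  n := f.n
  arity := f.arity
  sort := f.sort
  fn := fun b => r.h' f.sort (hf fun i => ⟨b i⟩) (f.fn fun i => r.h (f.arity i) (b i))

/-- The `(h,h')`-reflection `F_{(h,h')}` of a set of operations. -/
def reflectOps {A : S → Type u} {B : S → Type u'} (r : SortedReflection S A B)
    (F : Set (MOp S A)) : Set (MOp S B) :=
  {g | ∃ f ∈ F, ∃ hf : Reasonable B f, g = f.reflect r hf}

/-- The `(h,h')`-reflection `(R,R')_{(h,h')} = (h⁻¹(R), h'(R'))` of a relation pair,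
with components `∅` at the sorts `s` with `B_s = ∅`. -/
def RelPair.reflect {A : S → Type u} {B : S → Type u'} (p : RelPair S A)
    (r : SortedReflection S A B) : RelPair S B :=
  ⟨p.m,
   fun s => {x | Nonempty (B s) ∧ (fun j => r.h s (x j)) ∈ p.R s},
   fun s => {x | ∃ hs : Nonempty (B s), ∃ y ∈ p.R' s, x = fun j => r.h' s hs (y j)}⟩

/-- The `(h,h')`-coreflection `(T,T')^{(h,h')} = (h(T), h'⁻¹(T'))` of a relation pair,
with components `∅` at the sorts `s` with `B_s = ∅`. -/
def RelPair.coreflect {A : S → Type u} {B : S → Type u'} (q : RelPair S B)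
    (r : SortedReflection S A B) : RelPair S A :=
  ⟨q.m,
   fun s => {x | Nonempty (B s) ∧ ∃ y ∈ q.R s, x = fun j => r.h s (y j)},
   fun s => {x | ∃ hs : Nonempty (B s), (fun j => r.h' s hs (x j)) ∈ q.R' s}⟩

/-- Elementwise reflection `Q_{(h,h')}` of a set of relation pairs on `A`. -/
def reflectPairs {A : S → Type u} {B : S → Type u'} (r : SortedReflection S A B)
    (Q : Set (RelPair S A)) : Set (RelPair S B) :=
  (fun p => p.reflect r) '' Q

/-- Elementwise coreflection `Q^{(h,h')}` of a set of relation pairs on `B`. -/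
def coreflectPairs {A : S → Type u} {B : S → Type u'} (r : SortedReflection S A B)
    (Q : Set (RelPair S B)) : Set (RelPair S A) :=
  (fun q => q.coreflect r) '' Q

/-- The direct power `f^{⊗I}` of an operation, acting componentwise on `A^I`. -/
def MOp.pow {A : S → Type u} (f : MOp S A) (I : Type v) :
    MOp S (fun s => I → A s) where
  n := f.n
  arity := f.arity
  sort := f.sort
  fn := fun a i => f.fn fun j => a j i

/-- The direct power `F^{⊗I}` of a set of operations. -/
def powOps {A : S → Type u} (F : Set (MOp S A)) (I : Type v) :
    Set (MOp S (fun s => I → A s)) :=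
  {g | ∃ f ∈ F, g = f.pow I}

/-- Index of the `j`-th entry of the `i`-th block of length `k`. -/
def blockIdx {n k : ℕ} (i : Fin n) (j : Fin k) : Fin (n * k) :=
  ⟨i.val * k + j.val, by
    have hi := i.isLt
    have hj := j.isLt
    calc i.val * k + j.val < i.val * k + k := by omega
      _ = (i.val + 1) * k := by ring
      _ ≤ n * k := Nat.mul_le_mul_right k hi⟩

/-- The flattening `(T,T')↓` of a relation pair on `A^k`: an `n`-ary pair on `A^k`
becomes an `nk`-ary pair on `A`, grouping coordinates in consecutive blocks of
length `k`. -/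
def RelPair.flatten {A : S → Type u} {k : ℕ} (q : RelPair S (fun s => Fin k → A s)) :
    RelPair S A :=
  ⟨q.m * k,
   fun s => {x | (fun i j => x (blockIdx i j)) ∈ q.R s},
   fun s => {x | (fun i j => x (blockIdx i j)) ∈ q.R' s}⟩

/-- Elementwise flattening `T↓` of a set of relation pairs on `A^k`. -/
def flattenPairs {A : S → Type u} {k : ℕ}
    (T : Set (RelPair S (fun s => Fin k → A s))) : Set (RelPair S A) :=
  RelPair.flatten '' T

/-- The lifting `Q↑` of a set of relation pairs on `A`: the set of all liftings of
members of `Q` whose arity is divisible by `k`.  (For `k ≥ 1`, flattening is a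
bijection from relation pairs on `A^k` onto relation pairs on `A` of arity divisible
by `k`, and lifting is its inverse; hence `Q↑ = {q : q↓ ∈ Q}`.) -/
def liftPairs {A : S → Type u} (k : ℕ) (Q : Set (RelPair S A)) :
    Set (RelPair S (fun s => Fin k → A s)) :=
  {q | q.flatten ∈ Q}

/-- A minion homomorphism `λ : M1 → M2`: declaration-preserving and compatible with
the formation of minors. -/
structure MinionHom {A : S → Type u} {B : S → Type u'}
    (M1 : Set (MOp S A)) (M2 : Set (MOp S B)) where
  toFun : ∀ f ∈ M1, MOp S B
  mem : ∀ f hf, toFun f hf ∈ M2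
  decl_n : ∀ f hf, (toFun f hf).n = f.n
  decl_arity : ∀ f hf i, (toFun f hf).arity i = f.arity (Fin.cast (decl_n f hf) i)
  decl_sort : ∀ f hf, (toFun f hf).sort = f.sort
  map_minor : ∀ f hf, ∀ {m : ℕ} (u : Fin m → S) (σ : Fin f.n → Fin m)
      (h : ∀ i, u (σ i) = f.arity i) (hmem : f.minor u σ h ∈ M1),
      toFun (f.minor u σ h) hmem =
        (toFun f hf).minor u (fun i => σ (Fin.cast (decl_n f hf) i))
          (fun i => (h (Fin.cast (decl_n f hf) i)).trans (decl_arity f hf i).symm)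

section StatementSixAux

variable {S' : Type w} {A' : S' → Type u}

/-! ### Basic lemmas about `minorClosure` -/

private lemma isMinorClosed_sInter (𝒮 : Set (Set (RelPair S' A')))
    (h : ∀ T ∈ 𝒮, IsMinorClosed T) : IsMinorClosed (⋂₀ 𝒮) := by
  refine ⟨fun m ρ => ?_, fun p hp e => ?_, fun p hp => ?_, fun p hp q hq => ?_,
    fun p hp q hq hm => ?_, fun q hq p hrel => ?_, fun m T hT hTm => ?_⟩ <;>
    intro U hU
  · exact (h U hU).1 m ρ
  · exact (h U hU).2.1 p (hp U hU) e
  · exact (h U hU).2.2.1 p (hp U hU)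
  · exact (h U hU).2.2.2.1 p (hp U hU) q (hq U hU)
  · exact (h U hU).2.2.2.2.1 p (hp U hU) q (hq U hU) hm
  · exact (h U hU).2.2.2.2.2.1 q (hq U hU) p hrel
  · exact (h U hU).2.2.2.2.2.2 m T (fun p hp => hT hp U hU) hTm

private lemma isMinorClosed_minorClosure (Q : Set (RelPair S' A')) :
    IsMinorClosed (minorClosure Q) :=
  isMinorClosed_sInter _ fun _ hT => hT.1

private lemma subset_minorClosure (Q : Set (RelPair S' A')) : Q ⊆ minorClosure Q :=
  Set.subset_sInter fun _ hT => hT.2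

private lemma minorClosure_minimal {Q T : Set (RelPair S' A')} (hT : IsMinorClosed T)
    (hQT : Q ⊆ T) : minorClosure Q ⊆ T :=
  Set.sInter_subset_of_mem ⟨hT, hQT⟩

private lemma minorClosure_mono {Q Q' : Set (RelPair S' A')} (h : Q ⊆ Q') :
    minorClosure Q ⊆ minorClosure Q' :=
  minorClosure_minimal (isMinorClosed_minorClosure Q') (h.trans (subset_minorClosure Q'))

/-! ### Arithmetic of block indices -/

private lemma blockIdx_val {n k : ℕ} (i : Fin n) (j : Fin k) :
    (blockIdx i j).val = i.val * k + j.val := rfl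

private lemma fin_div_lt {m k : ℕ} (a : Fin (m * k)) : a.val / k < m :=
  Nat.div_lt_of_lt_mul (mul_comm m k ▸ a.isLt)

private lemma blockIdx_div {n k : ℕ} (i : Fin n) (j : Fin k) :
    (blockIdx i j).val / k = i.val := by
  rw [blockIdx_val, mul_comm, Nat.mul_add_div j.pos, Nat.div_eq_of_lt j.isLt, Nat.add_zero]

private lemma blockIdx_mod {n k : ℕ} (i : Fin n) (j : Fin k) :
    (blockIdx i j).val % k = j.val := by
  rw [blockIdx_val, mul_comm, Nat.mul_add_mod, Nat.mod_eq_of_lt j.isLt]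

private lemma blockIdx_surj {n k : ℕ} (hk : 0 < k) (a : Fin (n * k)) :
    ∃ (i : Fin n) (j : Fin k), a = blockIdx i j := by
  refine ⟨⟨a.val / k, fin_div_lt a⟩, ⟨a.val % k, Nat.mod_lt _ hk⟩, Fin.ext ?_⟩
  rw [blockIdx_val]
  exact (Nat.div_add_mod' a.val k).symm

private lemma app2_congr {α : Type*} {m k : ℕ} (y : Fin m → Fin k → α) {i i' : Fin m}
    {j j' : Fin k} (hi : i.val = i'.val) (hj : j.val = j'.val) : y i j = y i' j' := by
  have h1 : i = i' := Fin.ext hi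
  have h2 : j = j' := Fin.ext hj
  rw [h1, h2]

/-! ### The block permutation -/

private def blockMap {m k : ℕ} (hk : 0 < k) (e : Fin m → Fin m) :
    Fin (m * k) → Fin (m * k) := fun a =>
  blockIdx (e ⟨a.val / k, fin_div_lt a⟩) ⟨a.val % k, Nat.mod_lt _ hk⟩

private lemma blockMap_blockIdx {m k : ℕ} (hk : 0 < k) (e : Fin m → Fin m)
    (i : Fin m) (j : Fin k) : blockMap hk e (blockIdx i j) = blockIdx (e i) j := by
  unfold blockMap
  have h1 : (⟨(blockIdx i j).val / k, fin_div_lt _⟩ : Fin m) = i := Fin.ext (blockIdx_div i j)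
  have h2 : (⟨(blockIdx i j).val % k, Nat.mod_lt _ hk⟩ : Fin k) = j :=
    Fin.ext (blockIdx_mod i j)
  rw [h1, h2]

private def blockPerm {m k : ℕ} (hk : 0 < k) (e : Equiv.Perm (Fin m)) :
    Equiv.Perm (Fin (m * k)) where
  toFun := blockMap hk e
  invFun := blockMap hk e.symm
  left_inv a := by
    obtain ⟨i, j, rfl⟩ := blockIdx_surj hk a
    rw [show blockMap hk ⇑e = blockMap hk e from rfl, blockMap_blockIdx, blockMap_blockIdx,
      Equiv.symm_apply_apply]
  right_inv a := by
    obtain ⟨i, j, rfl⟩ := blockIdx_surj hk a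
    rw [show blockMap hk ⇑e = blockMap hk e from rfl, blockMap_blockIdx, blockMap_blockIdx,
      Equiv.apply_symm_apply]

private lemma blockPerm_blockIdx {m k : ℕ} (hk : 0 < k) (e : Equiv.Perm (Fin m))
    (i : Fin m) (j : Fin k) : blockPerm hk e (blockIdx i j) = blockIdx (e i) j :=
  blockMap_blockIdx hk e i j

/-! ### The block setoid -/

private def blockSetoid {m k : ℕ} (hk : 0 < k) (ρ : Setoid (Fin m)) :
    Setoid (Fin (m * k)) where
  r a b := ρ.r ⟨a.val / k, fin_div_lt a⟩ ⟨b.val / k, fin_div_lt b⟩ ∧ a.val % k = b.val % k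
  iseqv := ⟨fun a => ⟨ρ.refl _, rfl⟩, fun h => ⟨ρ.symm h.1, h.2.symm⟩,
    fun h h' => ⟨ρ.trans h.1 h'.1, h.2.trans h'.2⟩⟩

/-! ### Iterated deletion of coordinates -/

private def projIterP (p : RelPair S' A') : ℕ → RelPair S' A'
  | 0 => p
  | n + 1 => (projIterP p n).proj

private lemma projIterP_m (p : RelPair S' A') (n : ℕ) : (projIterP p n).m = p.m - n := by
  induction n with
  | zero => rfl
  | succ n ih => show (projIterP p n).m - 1 = _; omega

private lemma projIterP_mem {P : Set (RelPair S' A')}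
    (hproj : ∀ p ∈ P, RelPair.proj p ∈ P)
    {p : RelPair S' A'} (hp : p ∈ P) (n : ℕ) : projIterP p n ∈ P := by
  induction n with
  | zero => exact hp
  | succ n ih => exact hproj _ ih

private lemma projIterP_R_mem (p : RelPair S' A') (n : ℕ) :
    ∀ (s : S') (x : Fin ((projIterP p n).m) → A' s),
      x ∈ (projIterP p n).R s ↔
        ∃ y ∈ p.R s, ∀ j : Fin ((projIterP p n).m),
          x j = y ⟨j.val + n, by
            have h1 := j.isLt; have h2 := projIterP_m p n; omega⟩ := by
  induction n with
  | zero =>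
    intro s x
    constructor
    · intro hx
      exact ⟨x, hx, fun j => rfl⟩
    · rintro ⟨y, hy, hxy⟩
      have hx : x = y := funext fun j => hxy j
      exact hx ▸ hy
  | succ n ih =>
    intro s x
    constructor
    · rintro ⟨y, hy, hxy⟩
      obtain ⟨z, hz, hyz⟩ := (ih s y).1 hy
      refine ⟨z, hz, fun j => ?_⟩
      refine (hxy j).trans (((hyz _).trans (congrArg z (Fin.ext ?_))))
      show j.val + 1 + n = j.val + (n + 1); omega
    · rintro ⟨z, hz, hxz⟩
      refine ⟨fun j => z ⟨j.val + n, by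
          have h1 := j.isLt; have h2 := projIterP_m p n; omega⟩,
        (ih s _).2 ⟨z, hz, fun j => rfl⟩, fun j => ?_⟩
      exact (hxz j).trans (congrArg z (Fin.ext (by show j.val + (n + 1) = j.val + 1 + n; omega)))

private lemma projIterP_R'_mem (p : RelPair S' A') (n : ℕ) :
    ∀ (s : S') (x : Fin ((projIterP p n).m) → A' s),
      x ∈ (projIterP p n).R' s ↔
        ∃ y ∈ p.R' s, ∀ j : Fin ((projIterP p n).m),
          x j = y ⟨j.val + n, by
            have h1 := j.isLt; have h2 := projIterP_m p n; omega⟩ := by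
  induction n with
  | zero =>
    intro s x
    constructor
    · intro hx
      exact ⟨x, hx, fun j => rfl⟩
    · rintro ⟨y, hy, hxy⟩
      have hx : x = y := funext fun j => hxy j
      exact hx ▸ hy
  | succ n ih =>
    intro s x
    constructor
    · rintro ⟨y, hy, hxy⟩
      obtain ⟨z, hz, hyz⟩ := (ih s y).1 hy
      refine ⟨z, hz, fun j => ?_⟩
      refine (hxy j).trans (((hyz _).trans (congrArg z (Fin.ext ?_))))
      show j.val + 1 + n = j.val + (n + 1); omega
    · rintro ⟨z, hz, hxz⟩
      refine ⟨fun j => z ⟨j.val + n, by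
          have h1 := j.isLt; have h2 := projIterP_m p n; omega⟩,
        (ih s _).2 ⟨z, hz, fun j => rfl⟩, fun j => ?_⟩
      exact (hxz j).trans (congrArg z (Fin.ext (by show j.val + (n + 1) = j.val + 1 + n; omega)))

end StatementSixAux

private lemma isMinorClosed_liftPairs {S : Type w} {A : S → Type u} {k : ℕ} (hk : 0 < k)
    {P : Set (RelPair S A)} (hP : IsMinorClosed P) :
    IsMinorClosed (liftPairs k P) := by
  obtain ⟨hdiag, hperm, hproj, hprod, hinter, hrelax, hfam⟩ := hP
  refine ⟨?_, ?_, ?_, ?_, ?_, ?_, ?_⟩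
  -- diagonal pairs
  · intro m ρ
    show (diagPair (fun s => Fin k → A s) m ρ).flatten ∈ P
    have key : ∀ (s : S) (x : Fin (m * k) → A s),
        ((fun i j => x (blockIdx i j)) ∈ (diagPair (fun s => Fin k → A s) m ρ).R s) ↔
        (∀ a b : Fin (m * k), (blockSetoid hk ρ).r a b → x a = x b) := by
      intro s x
      constructor
      · intro hx a b hab
        obtain ⟨i, j, rfl⟩ := blockIdx_surj hk a
        obtain ⟨i', j', rfl⟩ := blockIdx_surj hk b
        have hi : (⟨(blockIdx i j).val / k, fin_div_lt _⟩ : Fin m) = i :=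
          Fin.ext (blockIdx_div i j)
        have hi' : (⟨(blockIdx i' j').val / k, fin_div_lt _⟩ : Fin m) = i' :=
          Fin.ext (blockIdx_div i' j')
        have hr : ρ.r i i' := by have h := hab.1; rwa [hi, hi'] at h
        have hj : j.val = j'.val := by
          have h := hab.2; rwa [blockIdx_mod, blockIdx_mod] at h
        have h := congrFun (hx i i' hr) j
        exact h.trans (congrArg x (Fin.ext (by rw [blockIdx_val, blockIdx_val, hj])))
      · intro hx i i' hr
        funext j
        refine hx (blockIdx i j) (blockIdx i' j) ⟨?_, ?_⟩
        · have hi : (⟨(blockIdx i j).val / k, fin_div_lt _⟩ : Fin m) = i :=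
            Fin.ext (blockIdx_div i j)
          have hi' : (⟨(blockIdx i' j).val / k, fin_div_lt _⟩ : Fin m) = i' :=
            Fin.ext (blockIdx_div i' j)
          rw [hi, hi']; exact hr
        · rw [blockIdx_mod, blockIdx_mod]
    refine hrelax _ (hdiag (m * k) (blockSetoid hk ρ)) _ ⟨rfl, ?_, ?_⟩
    · intro s x hx a b hab
      exact (key s x).1 hx a b hab
    · intro s x hx
      exact (key s x).2 hx
  -- permutations
  · intro p hp e
    show (p.permute e).flatten ∈ P
    refine hrelax _ (hperm p.flatten hp (blockPerm hk e)) _ ⟨rfl, ?_, ?_⟩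
    · intro s x hx
      show (fun (i : Fin p.m) (j : Fin k) => x ((blockPerm hk e) (blockIdx i j))) ∈ p.R s
      have hfe : (fun (i : Fin p.m) (j : Fin k) => x ((blockPerm hk e) (blockIdx i j)))
          = fun i j => x (blockIdx (e i) j) :=
        funext fun i => funext fun j => congrArg x (blockPerm_blockIdx hk e i j)
      rw [hfe]; exact hx
    · intro s x hx
      show (fun (i : Fin p.m) (j : Fin k) => x (blockIdx (e i) j)) ∈ p.R' s
      have hfe : (fun (i : Fin p.m) (j : Fin k) => x ((blockPerm hk e) (blockIdx i j)))
          = fun i j => x (blockIdx (e i) j) :=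
        funext fun i => funext fun j => congrArg x (blockPerm_blockIdx hk e i j)
      rw [← hfe]; exact hx
  -- deletion of a coordinate
  · intro p hp
    show p.proj.flatten ∈ P
    have hm : (p.m - 1) * k = (projIterP p.flatten k).m := by
      rw [projIterP_m, Nat.sub_one_mul]; rfl
    refine hrelax _ (projIterP_mem hproj hp k) _ ⟨hm, ?_, ?_⟩
    · intro s x hx
      obtain ⟨y, hy, hxy⟩ := hx
      refine (projIterP_R_mem p.flatten k s _).2
        ⟨fun b => y ⟨b.val / k, fin_div_lt b⟩ ⟨b.val % k, Nat.mod_lt _ hk⟩, ?_, ?_⟩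
      · show (fun (i : Fin p.m) (j : Fin k) =>
            y ⟨(blockIdx i j).val / k, fin_div_lt (blockIdx i j)⟩
              ⟨(blockIdx i j).val % k, Nat.mod_lt _ hk⟩) ∈ p.R s
        have hfe : (fun (i : Fin p.m) (j : Fin k) =>
            y ⟨(blockIdx i j).val / k, fin_div_lt (blockIdx i j)⟩
              ⟨(blockIdx i j).val % k, Nat.mod_lt _ hk⟩) = y :=
          funext fun i => funext fun j => app2_congr y (blockIdx_div i j) (blockIdx_mod i j)
        rw [hfe]; exact hy
      · intro a
        have hb : a.val < (p.m - 1) * k := lt_of_lt_of_eq a.isLt hm.symm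
        have h1 : x (Fin.cast hm.symm a) =
            x (blockIdx (⟨a.val / k, Nat.div_lt_of_lt_mul (mul_comm (p.m - 1) k ▸ hb)⟩ :
                Fin (p.m - 1)) ⟨a.val % k, Nat.mod_lt _ hk⟩) :=
          congrArg x (Fin.ext (by exact (Nat.div_add_mod' a.val k).symm))
        have h2 := congrFun
          (hxy ⟨a.val / k, Nat.div_lt_of_lt_mul (mul_comm (p.m - 1) k ▸ hb)⟩)
          (⟨a.val % k, Nat.mod_lt _ hk⟩ : Fin k)
        refine h1.trans (h2.trans ?_)
        exact app2_congr y
          (show a.val / k + 1 = (a.val + k) / k from (Nat.add_div_right a.val hk).symm)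
          (show a.val % k = (a.val + k) % k from (Nat.add_mod_right a.val k).symm)
    · intro s x hx
      obtain ⟨z, hz, hxz⟩ := (projIterP_R'_mem p.flatten k s x).1 hx
      refine ⟨fun i j => z (blockIdx i j), hz, fun i => funext fun j => ?_⟩
      refine (hxz (Fin.cast hm (blockIdx i j))).trans (congrArg z (Fin.ext ?_))
      show i.val * k + j.val + k = (i.val + 1) * k + j.val
      ring
  -- products
  · intro p hp q hq
    show (p.prod q).flatten ∈ P
    have hm : (p.m + q.m) * k = p.m * k + q.m * k := Nat.add_mul _ _ _
    refine hrelax _ (hprod p.flatten hp q.flatten hq) _ ⟨hm, ?_, ?_⟩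
    · intro s x hx
      obtain ⟨h1, h2⟩ := hx
      refine ⟨?_, ?_⟩
      · show (fun (i : Fin p.m) (j : Fin k) =>
            x (Fin.cast hm.symm (Fin.castAdd (q.m * k) (blockIdx i j)))) ∈ p.R s
        have hfe : (fun (i : Fin p.m) (j : Fin k) =>
            x (Fin.cast hm.symm (Fin.castAdd (q.m * k) (blockIdx i j))))
            = fun i j => x (blockIdx (Fin.castAdd q.m i) j) :=
          funext fun i => funext fun j => congrArg x (Fin.ext rfl)
        rw [hfe]; exact h1
      · show (fun (i : Fin q.m) (j : Fin k) =>
            x (Fin.cast hm.symm (Fin.natAdd (p.m * k) (blockIdx i j)))) ∈ q.R s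
        have hfe : (fun (i : Fin q.m) (j : Fin k) =>
            x (Fin.cast hm.symm (Fin.natAdd (p.m * k) (blockIdx i j))))
            = fun i j => x (blockIdx (Fin.natAdd p.m i) j) :=
          funext fun i => funext fun j => congrArg x (Fin.ext
            (show p.m * k + (i.val * k + j.val) = (p.m + i.val) * k + j.val by ring))
        rw [hfe]; exact h2
    · intro s x hx
      obtain ⟨h1, h2⟩ := hx
      refine ⟨?_, ?_⟩
      · show (fun (i : Fin p.m) (j : Fin k) =>
            x (Fin.cast hm (blockIdx (Fin.castAdd q.m i) j))) ∈ p.R' s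
        have hfe : (fun (i : Fin p.m) (j : Fin k) =>
            x (Fin.cast hm (blockIdx (Fin.castAdd q.m i) j)))
            = fun i j => x (Fin.castAdd (q.m * k) (blockIdx i j)) :=
          funext fun i => funext fun j => congrArg x (Fin.ext rfl)
        rw [hfe]; exact h1
      · show (fun (i : Fin q.m) (j : Fin k) =>
            x (Fin.cast hm (blockIdx (Fin.natAdd p.m i) j))) ∈ q.R' s
        have hfe : (fun (i : Fin q.m) (j : Fin k) =>
            x (Fin.cast hm (blockIdx (Fin.natAdd p.m i) j)))
            = fun i j => x (Fin.natAdd (p.m * k) (blockIdx i j)) :=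
          funext fun i => funext fun j => congrArg x (Fin.ext
            (show (p.m + i.val) * k + j.val = p.m * k + (i.val * k + j.val) by ring))
        rw [hfe]; exact h2
  -- intersections of pairs of equal arity
  · intro p hp q hq hm0
    show (p.interPair q hm0).flatten ∈ P
    have hmk : p.flatten.m = q.flatten.m := by show p.m * k = q.m * k; rw [hm0]
    refine hrelax _ (hinter p.flatten hp q.flatten hq hmk) _ ⟨rfl, ?_, ?_⟩
    · intro s x hx
      obtain ⟨h1, h2⟩ := hx
      refine ⟨h1, ?_⟩
      show (fun (i : Fin q.m) (j : Fin k) =>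
          x (Fin.cast hmk.symm (blockIdx i j))) ∈ q.R s
      have hfe : (fun (i : Fin q.m) (j : Fin k) =>
          x (Fin.cast hmk.symm (blockIdx i j)))
          = fun i j => x (blockIdx (Fin.cast hm0.symm i) j) :=
        funext fun i => funext fun j => congrArg x (Fin.ext rfl)
      rw [hfe]; exact h2
    · intro s x hx
      obtain ⟨h1, h2⟩ := hx
      refine ⟨h1, ?_⟩
      show (fun (i : Fin q.m) (j : Fin k) =>
          x (blockIdx (Fin.cast hm0.symm i) j)) ∈ q.R' s
      have hfe : (fun (i : Fin q.m) (j : Fin k) =>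
          x (Fin.cast hmk.symm (blockIdx i j)))
          = fun i j => x (blockIdx (Fin.cast hm0.symm i) j) :=
        funext fun i => funext fun j => congrArg x (Fin.ext rfl)
      rw [← hfe]; exact h2
  -- relaxations
  · intro q hq p hrel
    obtain ⟨hm0, h1, h2⟩ := hrel
    show p.flatten ∈ P
    have hmk : p.flatten.m = q.flatten.m := by show p.m * k = q.m * k; rw [hm0]
    refine hrelax q.flatten hq p.flatten ⟨hmk, ?_, ?_⟩
    · intro s x hx
      have h := h1 s _ hx
      show (fun (i : Fin q.m) (j : Fin k) =>
          x (Fin.cast hmk.symm (blockIdx i j))) ∈ q.R s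
      have hfe : (fun (i : Fin q.m) (j : Fin k) =>
          x (Fin.cast hmk.symm (blockIdx i j)))
          = fun i j => x (blockIdx (Fin.cast hm0.symm i) j) :=
        funext fun i => funext fun j => congrArg x (Fin.ext rfl)
      rw [hfe]; exact h
    · intro s x hx
      have h := h2 s _ hx
      show (fun (i : Fin p.m) (j : Fin k) =>
          x (Fin.cast hmk (blockIdx i j))) ∈ p.R' s
      have hfe : (fun (i : Fin p.m) (j : Fin k) =>
          x (Fin.cast hmk (blockIdx i j)))
          = fun i j => x (blockIdx (Fin.cast hm0 i) j) :=
        funext fun i => funext fun j => congrArg x (Fin.ext rfl)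
      rw [hfe]; exact h
  -- arbitrary intersections
  · intro m T hT hTm
    show (interFamily m T).flatten ∈ P
    have hsub : flattenPairs T ⊆ P := by rintro _ ⟨q0, hq0, rfl⟩; exact hT hq0
    have harr : ∀ p' ∈ flattenPairs T, p'.m = m * k := by
      rintro _ ⟨q0, hq0, rfl⟩; show q0.m * k = m * k; rw [hTm q0 hq0]
    refine hrelax _ (hfam (m * k) (flattenPairs T) hsub harr) _ ⟨rfl, ?_, ?_⟩
    · intro s x hx
      intro p' hp' h'
      obtain ⟨q0, hq0, rfl⟩ := hp'
      have h0 : m = q0.m := Nat.eq_of_mul_eq_mul_right hk h'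
      have h := hx q0 hq0 h0
      show (fun (i : Fin q0.m) (j : Fin k) =>
          x (Fin.cast h'.symm (blockIdx i j))) ∈ q0.R s
      have hfe : (fun (i : Fin q0.m) (j : Fin k) =>
          x (Fin.cast h'.symm (blockIdx i j)))
          = fun i j => x (blockIdx (Fin.cast h0.symm i) j) :=
        funext fun i => funext fun j => congrArg x (Fin.ext rfl)
      rw [hfe]; exact h
    · intro s x hx
      intro q0 hq0 h0
      have h' : m * k = (q0.flatten).m := by show m * k = q0.m * k; rw [h0]
      have h := hx q0.flatten ⟨q0, hq0, rfl⟩ h'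
      show (fun (i : Fin q0.m) (j : Fin k) =>
          x (blockIdx (Fin.cast h0.symm i) j)) ∈ q0.R' s
      have hfe : (fun (i : Fin q0.m) (j : Fin k) =>
          x (Fin.cast h'.symm (blockIdx i j)))
          = fun i j => x (blockIdx (Fin.cast h0.symm i) j) :=
        funext fun i => funext fun j => congrArg x (Fin.ext rfl)
      rw [← hfe]; exact h

/-- For any `Q ⊆ Rp(A^k)` (`k ∈ ℕ₊`), the minor closures in `Rp(A)`
satisfy `⟨Q↓⟩ = ⟨(⟨Q⟩)↓⟩`. -/
theorem minorClosure_flatten_eq {S : Type w} {A : S → Type u} (k : ℕ) (hk : 0 < k)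
    (Q : Set (RelPair S (fun s => Fin k → A s))) :
    minorClosure (flattenPairs Q) = minorClosure (flattenPairs (minorClosure Q)) := by
  apply Set.Subset.antisymm
  · exact minorClosure_mono (Set.image_mono (subset_minorClosure Q))
  · refine minorClosure_minimal (isMinorClosed_minorClosure _) ?_
    rintro _ ⟨q0, hq0, rfl⟩
    have hL : minorClosure Q ⊆ liftPairs k (minorClosure (flattenPairs Q)) :=
      minorClosure_minimal (isMinorClosed_liftPairs hk (isMinorClosed_minorClosure _))
        (fun q hq => subset_minorClosure _ ⟨q, hq, rfl⟩)
    exact hL hq0
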